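/- Let a_i = (c_i,c'_i,q_i,q'_i,m_i,m'_i) and b_i = (d_i,d'_i,p_i,p'_i,n_i,n'_i), i = 1,…,N, be elements of the twisted algebra. Then the off-diagonal twisted 1-form A_M := Σ_i π(a_i)·[γ⁵⊗D_M, π(b_i)]_ρ equals [[0, C],[D, 0]] in the internal index C, where C = k_R·δ_ṡ·diag_s(σ·Ξ, −σ'·Ξ) and D = conj(k_R)·δ_ṡ·diag_s(σ·Ξ, −σ'·Ξ), with σ := Σ_i c_i(d_i − d'_i) and σ' := Σ_i c'_i(d'_i − d_i). -/
import Mathlib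


open Matrix

noncomputable section

namespace TwistSM

/-! ### Dirac matrices -/

def pauli1 : Matrix (Fin 2) (Fin 2) ℂ := !![0, 1; 1, 0]
def pauli2 : Matrix (Fin 2) (Fin 2) ℂ := !![0, -Complex.I; Complex.I, 0]
def pauli3 : Matrix (Fin 2) (Fin 2) ℂ := !![1, 0; 0, -1]

/-- σ^μ = (I₂, −iσ₁, −iσ₂, −iσ₃) -/
def sigE : Fin 4 → Matrix (Fin 2) (Fin 2) ℂ :=
  ![1, (-Complex.I) • pauli1, (-Complex.I) • pauli2, (-Complex.I) • pauli3]
/-- σ̃^μ = (I₂, iσ₁, iσ₂, iσ₃) -/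
def sigTE : Fin 4 → Matrix (Fin 2) (Fin 2) ℂ :=
  ![1, Complex.I • pauli1, Complex.I • pauli2, Complex.I • pauli3]

/-- Diagonal 2×2 block matrix [[A,0],[0,B]] over a leading `Fin 2` index. -/
def dgB {m : Type} (A B : Matrix m m ℂ) : Matrix (Fin 2 × m) (Fin 2 × m) ℂ :=
  Matrix.of fun p q =>
    if p.1 = q.1 then (if p.1 = 0 then A p.2 q.2 else B p.2 q.2) else 0

/-- Off-diagonal 2×2 block matrix [[0,A],[B,0]] over a leading `Fin 2` index. -/
def odB {m : Type} (A B : Matrix m m ℂ) : Matrix (Fin 2 × m) (Fin 2 × m) ℂ :=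
  Matrix.of fun p q =>
    if p.1 = 0 then (if q.1 = 0 then 0 else A p.2 q.2)
    else (if q.1 = 0 then B p.2 q.2 else 0)

/-- Euclidean Dirac matrices γ^μ_E = [[0, σ^μ],[σ̃^μ, 0]], acting on the spinor
indices (s, ṡ). -/
def gammaE (μ : Fin 4) : Matrix (Fin 2 × Fin 2) (Fin 2 × Fin 2) ℂ := odB (sigE μ) (sigTE μ)

/-- Entrywise complex conjugation of a matrix. -/
def mconj {m n : Type} (A : Matrix m n ℂ) : Matrix m n ℂ := A.map (starRingEnd ℂ)

/-- C = i γ⁰_E γ²_E (the matrix part of the charge conjugation 𝒥 = C ∘ cc). -/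
def Kspin : Matrix (Fin 2 × Fin 2) (Fin 2 × Fin 2) ℂ := Complex.I • (gammaE 0 * gammaE 2)

/-! ### The twisted algebra and its representation on ℂ¹²⁸ -/

/-- Quaternionic 2×2 matrices: of the form [[α,β],[−conj β, conj α]]. -/
def IsQuat (q : Matrix (Fin 2) (Fin 2) ℂ) : Prop :=
  q 1 0 = -(starRingEnd ℂ) (q 0 1) ∧ q 1 1 = (starRingEnd ℂ) (q 0 0)

/-- An element (c, c', q, q', m, m') of the twisted algebra. -/
structure Alg : Type where
  c : ℂ
  c' : ℂ
  q : Matrix (Fin 2) (Fin 2) ℂ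
  q' : Matrix (Fin 2) (Fin 2) ℂ
  m : Matrix (Fin 3) (Fin 3) ℂ
  m' : Matrix (Fin 3) (Fin 3) ℂ
  hq : IsQuat q
  hq' : IsQuat q'

/-- The twist ρ: exchange primed and unprimed entries. -/
def Alg.rho (a : Alg) : Alg := ⟨a.c', a.c, a.q', a.q, a.m', a.m, a.hq', a.hq⟩

/-- Flavour index α, as a pair (flavour pair, index within the pair):
(0,0) = 1̇, (0,1) = 2̇, (1,0) = 1, (1,1) = 2. -/
abbrev Flav : Type := Fin 2 × Fin 2
/-- Internal index (I, α): lepto-colour I ∈ Fin 4 and flavour α. -/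
abbrev Intl : Type := Fin 4 × Flav
/-- (ṡ, (I, α)) -/
abbrev HalfNoS : Type := Fin 2 × Intl
/-- Half of the full space: (s, ṡ, (I, α)). -/
abbrev Half : Type := Fin 2 × HalfNoS
/-- ℂ¹²⁸, indexed by (C, s, ṡ, (I, α)). -/
abbrev Full : Type := Fin 2 × Half

/-- diag(c, conj c) as a 2×2 matrix. -/
def cdiag (c : ℂ) : Matrix (Fin 2) (Fin 2) ℂ := Matrix.diagonal ![c, (starRingEnd ℂ) c]

def pred3 (i : Fin 4) : Fin 3 := ⟨i.val - 1, by have := i.isLt; omega⟩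

/-- diag(c, m) as a 4×4 matrix on the lepto-colour index. -/
def sm4 (c : ℂ) (m : Matrix (Fin 3) (Fin 3) ℂ) : Matrix (Fin 4) (Fin 4) ℂ :=
  Matrix.of fun i j =>
    if i = 0 then (if j = 0 then c else 0)
    else if j = 0 then 0 else m (pred3 i) (pred3 j)

/-- Q_r = diag(c, conj c, q') on the flavour index. -/
def Qr (a : Alg) : Matrix Flav Flav ℂ := dgB (cdiag a.c) a.q'
/-- Q_l = diag(c', conj c', q) on the flavour index. -/
def Ql (a : Alg) : Matrix Flav Flav ℂ := dgB (cdiag a.c') a.q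

/-- diag_α(A⊗I₂, B⊗I₂) on (I, α). -/
def msect (A B : Matrix (Fin 4) (Fin 4) ℂ) : Matrix Intl Intl ℂ :=
  Matrix.of fun p q =>
    if p.2 = q.2 then (if p.2.1 = 0 then A p.1 q.1 else B p.1 q.1) else 0

/-- M_r = diag_α(𝗆⊗I₂, 𝗆'⊗I₂). -/
def Mr (a : Alg) : Matrix Intl Intl ℂ := msect (sm4 a.c a.m) (sm4 a.c' a.m')
/-- M_l = diag_α(𝗆'⊗I₂, 𝗆⊗I₂). -/
def Ml (a : Alg) : Matrix Intl Intl ℂ := msect (sm4 a.c' a.m') (sm4 a.c a.m)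

/-- Lift a flavour matrix to (ṡ, (I, α)), acting trivially on ṡ and I. -/
def liftQ (X : Matrix Flav Flav ℂ) : Matrix HalfNoS HalfNoS ℂ :=
  Matrix.of fun p q => if p.1 = q.1 ∧ p.2.1 = q.2.1 then X p.2.2 q.2.2 else 0

/-- Lift a matrix on (I, α) to (ṡ, (I, α)), acting trivially on ṡ. -/
def liftI (X : Matrix Intl Intl ℂ) : Matrix HalfNoS HalfNoS ℂ :=
  Matrix.of fun p q => if p.1 = q.1 then X p.2 q.2 else 0

/-- The Q-block of the representation: diag_s(Q_r, Q_l), trivial on ṡ and I. -/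
def Qmat (a : Alg) : Matrix Half Half ℂ := dgB (liftQ (Qr a)) (liftQ (Ql a))
/-- The M-block of the representation: diag_s(M_r, M_l), trivial on ṡ. -/
def Mmat (a : Alg) : Matrix Half Half ℂ := dgB (liftI (Mr a)) (liftI (Ml a))

/-- The representation π(a) = diag_C(Q, M) of the twisted algebra on ℂ¹²⁸. -/
def rep (a : Alg) : Matrix Full Full ℂ := dgB (Qmat a) (Mmat a)

/-- Twisted commutator [T, π(b)]_ρ = T·π(b) − π(ρ(b))·T. -/
def tcomm (T : Matrix Full Full ℂ) (b : Alg) : Matrix Full Full ℂ :=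
  T * rep b - rep b.rho * T

/-- K = (i γ⁰_E γ²_E) ⊗ ξ ⊗ I₁₆ (with ξ on the internal index C);
the real structure is J = K ∘ cc. -/
def Kmat : Matrix Full Full ℂ :=
  Matrix.of fun p q =>
    (!![0, 1; 1, 0] : Matrix (Fin 2) (Fin 2) ℂ) p.1 q.1 *
      Kspin (p.2.1, p.2.2.1) (q.2.1, q.2.2.1) *
      (if p.2.2.2 = q.2.2.2 then 1 else 0)

/-- J T J⁻¹ = −K · conj(T) · conj(K) as a matrix operation. -/
def Jconj (T : Matrix Full Full ℂ) : Matrix Full Full ℂ := -(Kmat * mconj T * mconj Kmat)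

/-! ### Yukawa and Majorana parts of the Dirac operator -/

/-- 𝗄^I = diag(k_u^I, k_d^I). -/
def kdiag (kν ke ku kd : ℂ) (i : Fin 4) : Matrix (Fin 2) (Fin 2) ℂ :=
  if i = 0 then Matrix.diagonal ![kν, ke] else Matrix.diagonal ![ku, kd]

/-- Block-diagonal matrix on (I, α) from a family of flavour matrices. -/
def diagI (F : Fin 4 → Matrix Flav Flav ℂ) : Matrix Intl Intl ℂ :=
  Matrix.of fun p q => if p.1 = q.1 then F p.1 p.2 q.2 else 0

/-- The Yukawa mass matrix D₀ = diag_I(D₀^I), D₀^I = [[0, conj 𝗄^I],[𝗄^I, 0]]. -/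
def D0 (kν ke ku kd : ℂ) : Matrix Intl Intl ℂ :=
  diagI fun i => odB (mconj (kdiag kν ke ku kd i)) (kdiag kν ke ku kd i)

/-- η ⊗ X, with η = diag_s(1,−1) ⊗ I₂ on (s, ṡ) and X on (I, α). -/
def etaD (X : Matrix Intl Intl ℂ) : Matrix Half Half ℂ := dgB (liftI X) (liftI (-X))

/-- γ⁵ ⊗ D_Y = diag_C(η⊗D₀, η⊗D₀†). -/
def g5DY (kν ke ku kd : ℂ) : Matrix Full Full ℂ :=
  dgB (etaD (D0 kν ke ku kd)) (etaD ((D0 kν ke ku kd)ᴴ))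

/-- Ξ = diag(1,0,0,0)_I ⊗ diag(1,0,0,0)_α on (I, α). -/
def XiI : Matrix Intl Intl ℂ :=
  Matrix.of fun p q =>
    if p = q ∧ p.1 = 0 ∧ p.2 = ((0 : Fin 2), (0 : Fin 2)) then 1 else 0

/-- γ⁵ ⊗ D_M = [[0, η⊗D_R],[η⊗D_R†, 0]]_C with D_R = k_R Ξ. -/
def g5DM (kR : ℂ) : Matrix Full Full ℂ :=
  odB (etaD (kR • XiI)) (etaD ((kR • XiI)ᴴ))

/-! ### The free 1-form -/

/-- Lift a spinor matrix (on (s, ṡ)) to ℂ¹²⁸, identity on C and (I, α). -/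
def liftSpin (G : Matrix (Fin 2 × Fin 2) (Fin 2 × Fin 2) ℂ) : Matrix Full Full ℂ :=
  Matrix.of fun p q =>
    (if p.1 = q.1 ∧ p.2.2.2 = q.2.2.2 then 1 else 0) * G (p.2.1, p.2.2.1) (q.2.1, q.2.2.1)

/-- Q_μ = diag_s(Q^r_μ, Q^l_μ), Q^{r/l}_μ = diag(c^{r/l}, conj c^{r/l}, q^{r/l}),
trivial on ṡ and I. -/
def freeQ (cr cl : ℂ) (qr ql : Matrix (Fin 2) (Fin 2) ℂ) : Matrix Half Half ℂ :=
  dgB (liftQ (dgB (cdiag cr) qr)) (liftQ (dgB (cdiag cl) ql))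

/-- M_μ = diag_s(M^r_μ, M^l_μ), M^r_μ = diag_α(𝗆^r⊗I₂, 𝗆^l⊗I₂), 𝗆^{r/l} = diag(c^{r/l}, m^{r/l}),
trivial on ṡ. -/
def freeM (cr cl : ℂ) (mr ml : Matrix (Fin 3) (Fin 3) ℂ) : Matrix Half Half ℂ :=
  dgB (liftI (msect (sm4 cr mr) (sm4 cl ml))) (liftI (msect (sm4 cl ml) (sm4 cr mr)))

/-- The free 1-form coefficient matrix A_μ = diag_C(Q_μ, M_μ). -/
def freeA (cr cl : ℂ) (qr ql : Matrix (Fin 2) (Fin 2) ℂ)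
    (mr ml : Matrix (Fin 3) (Fin 3) ℂ) : Matrix Full Full ℂ :=
  dgB (freeQ cr cl qr ql) (freeM cr cl mr ml)

/-! ### Partial derivatives -/

/-- Partial derivative in the μ-th coordinate direction of ℝ⁴ (ℂ-valued). -/
def pdC (μ : Fin 4) (f : (Fin 4 → ℝ) → ℂ) (x : Fin 4 → ℝ) : ℂ :=
  fderiv ℝ f x (Pi.single μ 1)

/-- Partial derivative in the μ-th coordinate direction of ℝ⁴ (ℝ-valued). -/
def pdR (μ : Fin 4) (f : (Fin 4 → ℝ) → ℝ) (x : Fin 4 → ℝ) : ℝ :=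
  fderiv ℝ f x (Pi.single μ 1)

/-- Entrywise partial derivative of a matrix-valued function. -/
def pdM {m n : Type} (μ : Fin 4) (F : (Fin 4 → ℝ) → Matrix m n ℂ) (x : Fin 4 → ℝ) :
    Matrix m n ℂ :=
  Matrix.of fun i j => pdC μ (fun y => F y i j) x


section Aux
set_option linter.unusedSectionVars false
variable {m : Type} [Fintype m]

lemma dgB_mul_dgB (A B C D : Matrix m m ℂ) : dgB A B * dgB C D = dgB (A*C) (B*D) := by
  ext ⟨i, p⟩ ⟨j, q⟩
  simp only [mul_apply, dgB, Matrix.of_apply, Fintype.sum_prod_type, Fin.sum_univ_two]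
  fin_cases i <;> fin_cases j <;> simp [mul_apply]

lemma odB_mul_dgB (A B C D : Matrix m m ℂ) : odB A B * dgB C D = odB (A*D) (B*C) := by
  ext ⟨i, p⟩ ⟨j, q⟩
  simp only [mul_apply, dgB, odB, Matrix.of_apply, Fintype.sum_prod_type, Fin.sum_univ_two]
  fin_cases i <;> fin_cases j <;> simp [mul_apply]

lemma dgB_mul_odB (A B C D : Matrix m m ℂ) : dgB C D * odB A B = odB (C*A) (D*B) := by
  ext ⟨i, p⟩ ⟨j, q⟩
  simp only [mul_apply, dgB, odB, Matrix.of_apply, Fintype.sum_prod_type, Fin.sum_univ_two]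
  fin_cases i <;> fin_cases j <;> simp [mul_apply]

lemma odB_sub (A B C D : Matrix m m ℂ) : odB A B - odB C D = odB (A - C) (B - D) := by
  ext ⟨i, p⟩ ⟨j, q⟩
  simp only [odB, Matrix.sub_apply, Matrix.of_apply]
  split_ifs <;> simp

lemma dgB_sub (A B C D : Matrix m m ℂ) : dgB A B - dgB C D = dgB (A - C) (B - D) := by
  ext ⟨i, p⟩ ⟨j, q⟩
  simp only [dgB, Matrix.sub_apply, Matrix.of_apply]
  split_ifs <;> simp

lemma dgB_smul (c : ℂ) (A B : Matrix m m ℂ) : c • dgB A B = dgB (c • A) (c • B) := by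
  ext ⟨i, p⟩ ⟨j, q⟩
  simp only [dgB, Matrix.smul_apply, Matrix.of_apply]
  split_ifs <;> simp

lemma odB_sum {N : ℕ} (f g : Fin N → Matrix m m ℂ) :
    ∑ i, odB (f i) (g i) = odB (∑ i, f i) (∑ i, g i) := by
  ext ⟨i, p⟩ ⟨j, q⟩
  simp only [odB, Matrix.sum_apply, Matrix.of_apply]
  split_ifs <;> simp

lemma dgB_sum {N : ℕ} (f g : Fin N → Matrix m m ℂ) :
    ∑ i, dgB (f i) (g i) = dgB (∑ i, f i) (∑ i, g i) := by
  ext ⟨i, p⟩ ⟨j, q⟩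
  simp only [dgB, Matrix.sum_apply, Matrix.of_apply]
  split_ifs <;> simp

end Aux

set_option linter.unusedSectionVars false

section Lift

/-- Lift a flavour matrix to (I, α) trivially on I. -/
def liftQI (X : Matrix Flav Flav ℂ) : Matrix Intl Intl ℂ :=
  Matrix.of fun p q => if p.1 = q.1 then X p.2 q.2 else 0

lemma liftQ_eq (X : Matrix Flav Flav ℂ) : liftQ X = liftI (liftQI X) := by
  ext ⟨s, p⟩ ⟨t, q⟩
  simp only [liftQ, liftI, liftQI, Matrix.of_apply]
  split_ifs <;> simp_all

lemma liftI_mul (X Y : Matrix Intl Intl ℂ) : liftI X * liftI Y = liftI (X * Y) := by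
  ext ⟨s, p⟩ ⟨t, q⟩
  simp only [mul_apply, liftI, Matrix.of_apply, Fintype.sum_prod_type, Fin.sum_univ_two]
  fin_cases s <;> fin_cases t <;> simp [mul_apply]

lemma liftI_sub (X Y : Matrix Intl Intl ℂ) : liftI X - liftI Y = liftI (X - Y) := by
  ext ⟨s, p⟩ ⟨t, q⟩
  simp only [liftI, Matrix.sub_apply, Matrix.of_apply]
  split_ifs <;> simp

lemma liftI_smul (c : ℂ) (X : Matrix Intl Intl ℂ) : c • liftI X = liftI (c • X) := by
  ext ⟨s, p⟩ ⟨t, q⟩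
  simp only [liftI, Matrix.smul_apply, Matrix.of_apply]
  split_ifs <;> simp

lemma liftI_sum {N : ℕ} (f : Fin N → Matrix Intl Intl ℂ) :
    ∑ i, liftI (f i) = liftI (∑ i, f i) := by
  ext ⟨s, p⟩ ⟨t, q⟩
  simp only [liftI, Matrix.sum_apply, Matrix.of_apply]
  split_ifs <;> simp

end Lift

section Xi

def eI : Intl := (0, (0, 0))

lemma XiI_apply (p q : Intl) : XiI p q = if p = eI ∧ q = eI then 1 else 0 := by
  obtain ⟨pi, pa⟩ := p; obtain ⟨qi, qa⟩ := q
  simp only [XiI, Matrix.of_apply, eI, Prod.mk.injEq]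
  by_cases h1 : pi = 0 <;> by_cases h2 : pa = ((0 : Fin 2), (0 : Fin 2)) <;>
    by_cases h3 : qi = 0 <;> by_cases h4 : qa = ((0 : Fin 2), (0 : Fin 2)) <;>
      subst_eqs <;> simp_all <;> (try exact fun h => absurd h.symm (by assumption)) <;> exact fun h => absurd h.symm (by assumption)

lemma XiI_mul_of (X : Matrix Intl Intl ℂ) (c : ℂ)
    (h : ∀ q, X eI q = if q = eI then c else 0) : XiI * X = c • XiI := by
  ext p q
  rw [mul_apply, Finset.sum_eq_single eI]
  · rw [XiI_apply, h]
    by_cases hp : p = eI <;> by_cases hq : q = eI <;> simp [hp, hq, XiI_apply]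
  · intro r _ hr; simp [XiI_apply, hr]
  · simp

lemma mul_XiI_of (X : Matrix Intl Intl ℂ) (c : ℂ)
    (h : ∀ p, X p eI = if p = eI then c else 0) : X * XiI = c • XiI := by
  ext p q
  rw [mul_apply, Finset.sum_eq_single eI]
  · rw [XiI_apply, h]
    by_cases hp : p = eI <;> by_cases hq : q = eI <;> simp [hp, hq, XiI_apply]
  · intro r _ hr; simp [XiI_apply, hr]
  · simp

lemma XiI_conjT : XiIᴴ = XiI := by
  ext p q
  simp only [conjTranspose_apply, XiI_apply]
  split_ifs <;> simp_all [and_comm]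

end Xi

section Rows

lemma msect_sm4_row (c : ℂ) (mm : Matrix (Fin 3) (Fin 3) ℂ) (B : Matrix (Fin 4) (Fin 4) ℂ)
    (q : Intl) : msect (sm4 c mm) B eI q = if q = eI then c else 0 := by
  obtain ⟨qi, qa⟩ := q
  simp only [msect, sm4, Matrix.of_apply, eI, Prod.mk.injEq]
  by_cases h3 : qi = 0 <;> by_cases h4 : qa = ((0 : Fin 2), (0 : Fin 2)) <;>
    simp_all [Prod.ext_iff] <;> simp_all [eq_comm]

lemma msect_sm4_col (c : ℂ) (mm : Matrix (Fin 3) (Fin 3) ℂ) (B : Matrix (Fin 4) (Fin 4) ℂ)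
    (p : Intl) : msect (sm4 c mm) B p eI = if p = eI then c else 0 := by
  obtain ⟨pi, pa⟩ := p
  simp only [msect, sm4, Matrix.of_apply, eI, Prod.mk.injEq]
  by_cases h3 : pi = 0 <;> by_cases h4 : pa = ((0 : Fin 2), (0 : Fin 2)) <;>
    simp_all [Prod.ext_iff] <;> simp_all [eq_comm]

lemma liftQI_cdiag_row (c : ℂ) (Q : Matrix (Fin 2) (Fin 2) ℂ) (q : Intl) :
    liftQI (dgB (cdiag c) Q) eI q = if q = eI then c else 0 := by
  obtain ⟨qi, ⟨q1, q2⟩⟩ := q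
  simp only [liftQI, dgB, cdiag, Matrix.of_apply, eI, Prod.mk.injEq]
  fin_cases q1 <;> fin_cases q2 <;>
    by_cases h3 : qi = 0 <;> simp_all [Matrix.diagonal, eq_comm]

lemma liftQI_cdiag_col (c : ℂ) (Q : Matrix (Fin 2) (Fin 2) ℂ) (p : Intl) :
    liftQI (dgB (cdiag c) Q) p eI = if p = eI then c else 0 := by
  obtain ⟨pi, ⟨p1, p2⟩⟩ := p
  simp only [liftQI, dgB, cdiag, Matrix.of_apply, eI, Prod.mk.injEq]
  fin_cases p1 <;> fin_cases p2 <;>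
    by_cases h3 : pi = 0 <;> simp_all [Matrix.diagonal, eq_comm]

lemma XiI_mul_msect (c : ℂ) (mm : Matrix (Fin 3) (Fin 3) ℂ) (B : Matrix (Fin 4) (Fin 4) ℂ) :
    XiI * msect (sm4 c mm) B = c • XiI :=
  XiI_mul_of _ _ (msect_sm4_row c mm B)

lemma msect_mul_XiI (c : ℂ) (mm : Matrix (Fin 3) (Fin 3) ℂ) (B : Matrix (Fin 4) (Fin 4) ℂ) :
    msect (sm4 c mm) B * XiI = c • XiI :=
  mul_XiI_of _ _ (msect_sm4_col c mm B)

lemma XiI_mul_liftQI (c : ℂ) (Q : Matrix (Fin 2) (Fin 2) ℂ) :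
    XiI * liftQI (dgB (cdiag c) Q) = c • XiI :=
  XiI_mul_of _ _ (liftQI_cdiag_row c Q)

lemma liftQI_mul_XiI (c : ℂ) (Q : Matrix (Fin 2) (Fin 2) ℂ) :
    liftQI (dgB (cdiag c) Q) * XiI = c • XiI :=
  mul_XiI_of _ _ (liftQI_cdiag_col c Q)

end Rows

lemma key (A B : Alg) (kR : ℂ) :
    rep A * tcomm (g5DM kR) B =
      odB (kR • dgB (liftI ((A.c * (B.c - B.c')) • XiI))
                (liftI ((-(A.c' * (B.c' - B.c))) • XiI)))
          ((starRingEnd ℂ) kR • dgB (liftI ((A.c * (B.c - B.c')) • XiI))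
                (liftI ((-(A.c' * (B.c' - B.c))) • XiI))) := by
  have hXi : (kR • XiI)ᴴ = (starRingEnd ℂ) kR • XiI := by
    rw [Matrix.conjTranspose_smul, XiI_conjT]; rfl
  simp only [tcomm, rep, g5DM, hXi, etaD, Qmat, Mmat, Qr, Ql, Mr, Ml, Alg.rho, liftQ_eq,
    dgB_mul_dgB, odB_mul_dgB, dgB_mul_odB, odB_sub, dgB_sub, liftI_mul, liftI_sub,
    liftI_smul, dgB_smul, smul_mul_assoc, mul_smul_comm, neg_mul, mul_neg, neg_neg,
    XiI_mul_msect, msect_mul_XiI, XiI_mul_liftQI, liftQI_mul_XiI, smul_smul, neg_smul,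
    sub_neg_eq_add, mul_sub, sub_mul, mul_add, add_mul]
  refine congrArg₂ odB (congrArg₂ dgB (congrArg liftI ?_) (congrArg liftI ?_))
    (congrArg₂ dgB (congrArg liftI ?_) (congrArg liftI ?_)) <;> module


/-- the off-diagonal twisted 1-form A_M = Σᵢ π(aᵢ)·[γ⁵⊗D_M, π(bᵢ)]_ρ is
[[0, C],[D, 0]]_C with C = k_R·δ_ṡ·diag_s(σΞ, −σ'Ξ), D = conj(k_R)·δ_ṡ·diag_s(σΞ, −σ'Ξ),
σ = Σᵢ cᵢ(dᵢ − d'ᵢ), σ' = Σᵢ c'ᵢ(d'ᵢ − dᵢ). -/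
theorem statement8 (N : ℕ) (a b : Fin N → Alg) (kR : ℂ) :
    let σ : ℂ := ∑ i, (a i).c * ((b i).c - (b i).c')
    let σ' : ℂ := ∑ i, (a i).c' * ((b i).c' - (b i).c)
    let S0 : Matrix Half Half ℂ := dgB (liftI (σ • XiI)) (liftI ((-σ') • XiI))
    (∑ i, rep (a i) * tcomm (g5DM kR) (b i))
      = odB (kR • S0) ((starRingEnd ℂ) kR • S0) := by
  intro σ σ' S0
  simp only [S0, σ, σ', key, dgB_smul, liftI_smul, smul_smul]
  rw [odB_sum]; simp only [dgB_sum, liftI_sum]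
  refine congrArg₂ odB (congrArg₂ dgB (congrArg liftI ?_) (congrArg liftI ?_))
    (congrArg₂ dgB (congrArg liftI ?_) (congrArg liftI ?_)) <;>
    rw [← Finset.sum_smul] <;> congr 1 <;>
    simp only [Finset.mul_sum, neg_mul, mul_neg, ← Finset.sum_neg_distrib] <;>
    exact Finset.sum_congr rfl fun i _ => by ring


end TwistSM
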